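/- arXiv:1010.3684 — 3 statements merged into one kernel-verified Lean document; each statement's English description precedes it below -/
import Mathlib

section
/- Let ψ: (0,1) → ℝ be a positive differentiable function satisfying the ODE 0 = -(3/4)ψ(s)² + ψ(s) - s² + s·ψ(s) - (1-s)·ψ(s)·ψ'(s) for all s ∈ (0,1), and suppose lim_{s→1} ψ(s) = 2/3. Then ψ(s) < s for all s ∈ (0,1). -/
open Set Filter Topology

/-- If ψ is positive, differentiable on (0,1), satisfies the ODE
`0 = -(3/4)ψ² + ψ - s² + sψ - (1-s)ψψ'`, and ψ(s) → 2/3 as s → 1⁻,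
then ψ(s) < s for all s ∈ (0,1). -/
theorem stmt_1 (ψ ψ' : ℝ → ℝ)
    (hderiv : ∀ s ∈ Set.Ioo (0:ℝ) 1, HasDerivAt ψ (ψ' s) s)
    (hpos : ∀ s ∈ Set.Ioo (0:ℝ) 1, 0 < ψ s)
    (hode : ∀ s ∈ Set.Ioo (0:ℝ) 1,
      0 = -(3/4) * (ψ s)^2 + ψ s - s^2 + s * ψ s - (1 - s) * ψ s * ψ' s)
    (hlim : Filter.Tendsto ψ (nhdsWithin 1 (Set.Iio 1)) (nhds (2/3))) :
    ∀ s ∈ Set.Ioo (0:ℝ) 1, ψ s < s := by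
  intro s₁ hs₁
  by_contra hlt
  push_neg at hlt
  -- near 1, ψ < id
  have hnear : ∀ᶠ x in 𝓝[<] (1:ℝ), ψ x < x := by
    have h1 : ∀ᶠ x in 𝓝[<] (1:ℝ), ψ x < 3/4 :=
      hlim.eventually (gt_mem_nhds (by norm_num : (2:ℝ)/3 < 3/4))
    have h2 : ∀ᶠ x in 𝓝[<] (1:ℝ), (3:ℝ)/4 < x :=
      Filter.Eventually.filter_mono nhdsWithin_le_nhds
        (eventually_gt_nhds (by norm_num))
    filter_upwards [h1, h2] with x hx1 hx2 using hx1.trans hx2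
  obtain ⟨l, hl, hIoo⟩ := mem_nhdsLT_iff_exists_Ioo_subset.mp hnear
  set S : Set ℝ := {x | x ∈ Set.Ioo (0:ℝ) 1 ∧ x ≤ ψ x} with hS
  have hmemS : s₁ ∈ S := ⟨hs₁, hlt⟩
  have hB : ∀ x ∈ S, x ≤ max l s₁ := by
    intro x hx
    by_contra hxB
    push_neg at hxB
    have hxl : x ∈ Set.Ioo l 1 := ⟨(le_max_left l s₁).trans_lt hxB, hx.1.2⟩
    exact absurd (hIoo hxl) (not_lt.mpr hx.2)
  set s₀ := sSup S with hs₀def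
  have hs₀mem : s₁ ≤ s₀ := le_csSup ⟨max l s₁, hB⟩ hmemS
  have hs₀lt1 : s₀ < 1 := lt_of_le_of_lt (csSup_le ⟨s₁, hmemS⟩ hB)
    (max_lt hl hs₁.2)
  have hs₀pos : 0 < s₀ := hs₁.1.trans_le hs₀mem
  have hs₀I : s₀ ∈ Set.Ioo (0:ℝ) 1 := ⟨hs₀pos, hs₀lt1⟩
  have hub : ∀ x ∈ S, x ≤ s₀ := fun x hx => le_csSup ⟨max l s₁, hB⟩ hx
  -- ψ s₀ ≥ s₀
  have hge : s₀ ≤ ψ s₀ := by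
    by_contra hgt
    push_neg at hgt
    have hc : ContinuousAt (fun x => ψ x - x) s₀ :=
      ((hderiv s₀ hs₀I).continuousAt).sub continuousAt_id
    have hev : ∀ᶠ x in 𝓝 s₀, ψ x - x < 0 :=
      hc.eventually_lt continuousAt_const (by simpa using sub_neg.mpr hgt)
    obtain ⟨ε, hε, hball⟩ := Metric.eventually_nhds_iff_ball.mp hev
    have : ∀ x ∈ S, x ≤ s₀ - ε := by
      intro x hx
      by_contra hxε
      push_neg at hxε
      have hxs₀ : x ≤ s₀ := hub x hx
      have : x ∈ Metric.ball s₀ ε := by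
        rw [Metric.mem_ball, Real.dist_eq, abs_lt]
        constructor <;> linarith
      have := hball x this
      have := hx.2
      linarith
    have := csSup_le ⟨s₁, hmemS⟩ this
    linarith
  -- ψ s₀ ≤ s₀ : otherwise by continuity points to the right are in S
  have hle : ψ s₀ ≤ s₀ := by
    by_contra hgt
    push_neg at hgt
    have hc : ContinuousAt (fun x => ψ x - x) s₀ :=
      ((hderiv s₀ hs₀I).continuousAt).sub continuousAt_id
    have hev : ∀ᶠ x in 𝓝 s₀, 0 < ψ x - x :=
      continuousAt_const.eventually_lt hc (by simpa using sub_pos.mpr hgt)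
    have hev2 : ∀ᶠ x in 𝓝[>] s₀, 0 < ψ x - x :=
      hev.filter_mono nhdsWithin_le_nhds
    have hev3 : ∀ᶠ x in 𝓝[>] s₀, x ∈ Set.Ioo (0:ℝ) 1 := by
      have : Set.Ioo (0:ℝ) 1 ∈ 𝓝 s₀ := Ioo_mem_nhds hs₀pos hs₀lt1
      exact eventually_nhdsWithin_of_eventually_nhds this
    obtain ⟨x, hx1, hx2, hx3⟩ := (hev2.and (hev3.and self_mem_nhdsWithin)).exists
    have hxs₀ : s₀ < x := hx3
    have : x ∈ S := ⟨hx2, by linarith⟩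
    have := hub x this
    linarith
  have heq : ψ s₀ = s₀ := le_antisymm hle hge
  -- compute derivative
  have hψ' : ψ' s₀ = (1 - (3/4) * s₀) / (1 - s₀) := by
    have h := hode s₀ hs₀I
    rw [heq] at h
    have h1 : (1 - s₀) ≠ 0 := by linarith [hs₀lt1]
    field_simp
    nlinarith [h]
  have hg' : 0 < ψ' s₀ - 1 := by
    rw [hψ']
    have h1 : (0:ℝ) < 1 - s₀ := by linarith
    rw [sub_pos, lt_div_iff₀ h1]
    nlinarith
  -- slope argument
  have hd : HasDerivAt (fun x => ψ x - x) (ψ' s₀ - 1) s₀ :=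
    (hderiv s₀ hs₀I).sub (hasDerivAt_id s₀)
  have hslope := hasDerivAt_iff_tendsto_slope.mp hd
  have hev : ∀ᶠ x in 𝓝[≠] s₀, 0 < slope (fun x => ψ x - x) s₀ x :=
    hslope.eventually (eventually_gt_nhds hg')
  have hev2 : ∀ᶠ x in 𝓝[>] s₀, 0 < slope (fun x => ψ x - x) s₀ x :=
    hev.filter_mono (nhdsWithin_mono _ (fun x hx => ne_of_gt hx))
  have hev3 : ∀ᶠ x in 𝓝[>] s₀, x ∈ Set.Ioo (0:ℝ) 1 :=
    eventually_nhdsWithin_of_eventually_nhds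
      (Ioo_mem_nhds hs₀pos hs₀lt1)
  obtain ⟨x, hxs, hxI, hxgt'⟩ := (hev2.and (hev3.and self_mem_nhdsWithin)).exists
  have hxgt : s₀ < x := hxgt'
  have hxdiff : 0 < x - s₀ := by linarith
  have : 0 < ψ x - x := by
    have := hxs
    rw [slope_def_field] at this
    have h0 : ψ s₀ - s₀ = 0 := by rw [heq]; ring
    rw [lt_div_iff₀ hxdiff] at this
    nlinarith [this, h0]
  have hmem : x ∈ S := ⟨hxI, by linarith⟩
  have := hub x hmem
  linarith
end

section
/- Let (M,g) be a 3-dimensional steady gradient Ricci soliton with R + |∇f|² = 1, and let ψ: (0,1) → ℝ be smooth. Set X = ∇R + ψ(R)∇f on the set {0 < R < 1}. Then (1-R)·div X = -|B|² - (3/4)⟨∇R - ψ(R)∇f, X⟩ - ⟨∇f,X⟩ + (1-R)ψ'(R)⟨∇f,X⟩ - (3/4)(1-R)ψ(R)² + (1-R)ψ(R) - R²(1-R) + R(1-R)ψ(R) - (1-R)²ψ(R)ψ'(R), where B is the tensor from Proposition 2. -/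
/-- On a 3-dimensional steady gradient Ricci soliton with R + |∇f|² = 1
and ψ smooth, the vector field X = ∇R + ψ(R)∇f satisfies, on {0 < R < 1},
(1-R)div X = -|B|² - (3/4)⟨∇R - ψ(R)∇f, X⟩ - ⟨∇f,X⟩ + (1-R)ψ'(R)⟨∇f,X⟩
 - (3/4)(1-R)ψ(R)² + (1-R)ψ(R) - R²(1-R) + R(1-R)ψ(R) - (1-R)²ψ(R)ψ'(R).
We work in components w.r.t. an orthonormal frame; `lapR`, `lapf`, `divX` are the
values of ΔR, Δf, and div X; the previously established identities
div X = ΔR + ψ(R)Δf + ψ'(R)⟨∇f,∇R⟩, Δf = R,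
|B|² = -(1-R)ΔR - (3/4)|∇R|² - ⟨∇f,∇R⟩ - R²(1-R), ∇R = -2Ric(∇f), and the
normalization R + |∇f|² = 1 are assumed, as allowed. -/
theorem stmt_7 {M : Type*}
    (R lapR lapf divX : M → ℝ) (ψ ψ' : ℝ → ℝ)
    (hψderiv : ∀ s ∈ Set.Ioo (0:ℝ) 1, HasDerivAt ψ (ψ' s) s)
    (Ric : M → Fin 3 → Fin 3 → ℝ)
    (gradf gradR : M → Fin 3 → ℝ)
    (hRicSymm : ∀ x i j, Ric x i j = Ric x j i)
    (hgradR : ∀ x i, gradR x i = -2 * ∑ j, Ric x i j * gradf x j)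
    (hlapf : ∀ x, lapf x = R x)
    (hnorm : ∀ x, R x + ∑ i, (gradf x i)^2 = 1)
    (B : M → Fin 3 → Fin 3 → Fin 3 → ℝ)
    (hB : ∀ x i j k, B x i j k = Ric x i k * gradf x j - Ric x i j * gradf x k
      - (1/4) * ((gradR x j + 2 * R x * gradf x j) * (if i = k then (1:ℝ) else 0)
        - (gradR x k + 2 * R x * gradf x k) * (if i = j then (1:ℝ) else 0)))
    (hBnorm : ∀ x, ∑ i, ∑ j, ∑ k, (B x i j k)^2
      = -(1 - R x) * lapR x - (3/4) * (∑ i, (gradR x i)^2)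
        - (∑ i, gradf x i * gradR x i) - (R x)^2 * (1 - R x))
    (X : M → Fin 3 → ℝ)
    (hX : ∀ x i, X x i = gradR x i + ψ (R x) * gradf x i)
    (hdivX : ∀ x, divX x = lapR x + ψ (R x) * lapf x
      + ψ' (R x) * ∑ i, gradf x i * gradR x i) :
    ∀ x, 0 < R x → R x < 1 →
      (1 - R x) * divX x
        = -(∑ i, ∑ j, ∑ k, (B x i j k)^2)
          - (3/4) * (∑ i, (gradR x i - ψ (R x) * gradf x i) * X x i)
          - (∑ i, gradf x i * X x i)
          + (1 - R x) * ψ' (R x) * (∑ i, gradf x i * X x i)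
          - (3/4) * (1 - R x) * (ψ (R x))^2 + (1 - R x) * ψ (R x)
          - (R x)^2 * (1 - R x) + R x * (1 - R x) * ψ (R x)
          - (1 - R x)^2 * ψ (R x) * ψ' (R x) := by
  intro x h0 h1
  have hc : (∑ i, (gradf x i)^2) = 1 - R x := by linarith [hnorm x]
  have h1s : (∑ i, gradf x i * X x i)
      = (∑ i, gradf x i * gradR x i) + ψ (R x) * (1 - R x) := by
    rw [← hc, Finset.mul_sum, ← Finset.sum_add_distrib]
    exact Finset.sum_congr rfl fun i _ => by rw [hX]; ring
  have h2s : (∑ i, (gradR x i - ψ (R x) * gradf x i) * X x i)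
      = (∑ i, (gradR x i)^2) - (ψ (R x))^2 * (1 - R x) := by
    rw [← hc, Finset.mul_sum, ← Finset.sum_sub_distrib]
    exact Finset.sum_congr rfl fun i _ => by rw [hX]; ring
  rw [hdivX, hlapf, hBnorm, h1s, h2s]
  ring
end

section
/- Let R, f be smooth functions on a Riemannian 3-manifold (part of a steady soliton with R+|∇f|²=1), ψ smooth satisfying the ODE 0 = -(3/4)ψ² + ψ - s² + sψ - (1-s)ψψ', and u(s) = log ψ(s) + ∫_{1/2}^s (3/(2(1-t)) - 1/((1-t)ψ(t))) dt. Then with X = ∇R + ψ(R)∇f, one has (1-R)·e^{-u(R)}·div(e^{u(R)}X) = -|B|² - (R(R-ψ(R))/ψ(R)²)·|X|². -/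
/-!
Writing `u'` for the weight multiplying `⟨∇R, X⟩` in `div (e^{u(R)} X)`, the terms in `⟨∇f, X⟩`
cancel identically once `⟨∇R, X⟩` and `⟨∇R - ψ ∇f, X⟩` are expressed through `|X|²` and
`⟨∇f, X⟩`, leaving `-|B|² + ((1 - R) u'(R) - 3/4) |X|²`; the ODE for `ψ` is precisely the
statement that `(1 - s) u'(s) - 3/4 = -s (s - ψ(s)) / ψ(s)²`.
-/

theorem sum_mul_eq_sum_sq_add {ι : Type*} [Fintype ι] {a b X : ι → ℝ} {c : ℝ} (d : ℝ)
    (hX : ∀ i, X i = a i + c * b i) :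
    ∑ i, (a i + d * b i) * X i = ∑ i, X i ^ 2 + (d - c) * ∑ i, b i * X i := by
  rw [Finset.mul_sum, ← Finset.sum_add_distrib]
  refine Finset.sum_congr rfl fun i _ => ?_
  rw [hX]
  ring

theorem one_sub_mul_deriv_u_mul_eq {s p p' : ℝ} (hs : s ≠ 1) (hp : p ≠ 0) :
    (1 - s) * (p' / p + 3 / (2 * (1 - s)) - 1 / ((1 - s) * p)) * p
      = (1 - s) * p' + 3 / 2 * p - 1 := by
  have hs' : 1 - s ≠ 0 := sub_ne_zero.mpr hs.symm
  field_simp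

theorem one_sub_mul_deriv_u_eq {s p p' : ℝ} (hs : s ≠ 1) (hp : p ≠ 0)
    (hode : 0 = -(3 / 4) * p ^ 2 + p - s ^ 2 + s * p - (1 - s) * p * p') :
    (1 - s) * (p' / p + 3 / (2 * (1 - s)) - 1 / ((1 - s) * p)) = 3 / 4 - s * (s - p) / p ^ 2 := by
  have hs' : 1 - s ≠ 0 := sub_ne_zero.mpr hs.symm
  field_simp
  linear_combination 8 * hode

theorem stmt_8_general {M : Type*}
    (R divX divEuX : M → ℝ) (ψ ψ' : ℝ → ℝ)
    (hψpos : ∀ s ∈ Set.Ioo (0:ℝ) 1, 0 < ψ s)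
    (hode : ∀ s ∈ Set.Ioo (0:ℝ) 1,
      0 = -(3/4) * (ψ s)^2 + ψ s - s^2 + s * ψ s - (1 - s) * ψ s * ψ' s)
    (u : ℝ → ℝ)
    (gradf gradR : M → Fin 3 → ℝ)
    (hR : ∀ x : M, R x ∈ Set.Ioo (0:ℝ) 1)
    (B : M → Fin 3 → Fin 3 → Fin 3 → ℝ)
    (X : M → Fin 3 → ℝ)
    (hX : ∀ x i, X x i = gradR x i + ψ (R x) * gradf x i)
    (hdivX : ∀ x, (1 - R x) * divX x
      = -(∑ i, ∑ j, ∑ k, (B x i j k)^2)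
        - (3/4) * (∑ i, (gradR x i - ψ (R x) * gradf x i) * X x i)
        - (∑ i, gradf x i * X x i)
        + (1 - R x) * ψ' (R x) * (∑ i, gradf x i * X x i))
    (hdivEuX : ∀ x, divEuX x = Real.exp (u (R x)) * (divX x
      + (ψ' (R x) / ψ (R x) + 3 / (2 * (1 - R x)) - 1 / ((1 - R x) * ψ (R x)))
        * ∑ i, gradR x i * X x i)) :
    ∀ x, (1 - R x) * Real.exp (-(u (R x))) * divEuX x
      = -(∑ i, ∑ j, ∑ k, (B x i j k)^2)
        - (R x * (R x - ψ (R x)) / (ψ (R x))^2) * (∑ i, (X x i)^2) := by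
  intro x
  have hs := (hR x).2.ne
  have hp := (hψpos _ (hR x)).ne'
  have hweight := one_sub_mul_deriv_u_eq hs hp (hode _ (hR x))
  have hweight_mul := one_sub_mul_deriv_u_mul_eq (p' := ψ' (R x)) hs hp
  have hgradR := sum_mul_eq_sum_sq_add 0 (hX x)
  have hdiff := sum_mul_eq_sum_sq_add (-ψ (R x)) (hX x)
  simp only [zero_mul, add_zero, zero_sub, neg_mul, ← sub_eq_add_neg] at hgradR hdiff
  rw [hdivEuX x, mul_assoc, Real.exp_neg, inv_mul_cancel_left₀ (Real.exp_pos _).ne']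
  set w := ψ' (R x) / ψ (R x) + 3 / (2 * (1 - R x)) - 1 / ((1 - R x) * ψ (R x))
  linear_combination hdivX x + (1 - R x) * w * hgradR - 3 / 4 * hdiff
    + (∑ i, X x i ^ 2) * hweight - (∑ i, gradf x i * X x i) * hweight_mul

/-- On a 3-dimensional steady gradient Ricci soliton with 0 < R < 1,
normalized by R + |∇f|² = 1, with ψ positive smooth solving the ODE
0 = -(3/4)ψ² + ψ - s² + sψ - (1-s)ψψ' and
u(s) = log ψ(s) + ∫_{1/2}^s (3/(2(1-t)) - 1/((1-t)ψ(t))) dt, the vector field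
X = ∇R + ψ(R)∇f satisfies
(1-R)e^{-u(R)}div(e^{u(R)}X) = -|B|² - (R(R-ψ(R))/ψ(R)²)|X|².
We work in components w.r.t. an orthonormal frame; the previously established identity
(1-R)div X = -|B|² - (3/4)⟨∇R - ψ(R)∇f, X⟩ - ⟨∇f,X⟩ + (1-R)ψ'(R)⟨∇f,X⟩, the
expansion div(e^{u(R)}X) = e^{u(R)}(div X + u'(R)⟨∇R,X⟩) with
u'(s) = ψ'(s)/ψ(s) + 3/(2(1-s)) - 1/((1-s)ψ(s)), and the normalization may be
assumed, as allowed. -/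
theorem stmt_8 {M : Type*}
    (R divX divEuX : M → ℝ) (ψ ψ' : ℝ → ℝ)
    (hψderiv : ∀ s ∈ Set.Ioo (0:ℝ) 1, HasDerivAt ψ (ψ' s) s)
    (hψpos : ∀ s ∈ Set.Ioo (0:ℝ) 1, 0 < ψ s)
    (hode : ∀ s ∈ Set.Ioo (0:ℝ) 1,
      0 = -(3/4) * (ψ s)^2 + ψ s - s^2 + s * ψ s - (1 - s) * ψ s * ψ' s)
    (u : ℝ → ℝ)
    (hu : ∀ s ∈ Set.Ioo (0:ℝ) 1, u s = Real.log (ψ s)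
      + ∫ t in (1/2:ℝ)..s, (3 / (2 * (1 - t)) - 1 / ((1 - t) * ψ t)))
    (Ric : M → Fin 3 → Fin 3 → ℝ)
    (gradf gradR : M → Fin 3 → ℝ)
    (hRicSymm : ∀ x i j, Ric x i j = Ric x j i)
    (hgradR : ∀ x i, gradR x i = -2 * ∑ j, Ric x i j * gradf x j)
    (hR : ∀ x : M, R x ∈ Set.Ioo (0:ℝ) 1)
    (hnorm : ∀ x, R x + ∑ i, (gradf x i)^2 = 1)
    (B : M → Fin 3 → Fin 3 → Fin 3 → ℝ)
    (hB : ∀ x i j k, B x i j k = Ric x i k * gradf x j - Ric x i j * gradf x k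
      - (1/4) * ((gradR x j + 2 * R x * gradf x j) * (if i = k then (1:ℝ) else 0)
        - (gradR x k + 2 * R x * gradf x k) * (if i = j then (1:ℝ) else 0)))
    (X : M → Fin 3 → ℝ)
    (hX : ∀ x i, X x i = gradR x i + ψ (R x) * gradf x i)
    (hdivX : ∀ x, (1 - R x) * divX x
      = -(∑ i, ∑ j, ∑ k, (B x i j k)^2)
        - (3/4) * (∑ i, (gradR x i - ψ (R x) * gradf x i) * X x i)
        - (∑ i, gradf x i * X x i)
        + (1 - R x) * ψ' (R x) * (∑ i, gradf x i * X x i))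
    (hdivEuX : ∀ x, divEuX x = Real.exp (u (R x)) * (divX x
      + (ψ' (R x) / ψ (R x) + 3 / (2 * (1 - R x)) - 1 / ((1 - R x) * ψ (R x)))
        * ∑ i, gradR x i * X x i)) :
    ∀ x, (1 - R x) * Real.exp (-(u (R x))) * divEuX x
      = -(∑ i, ∑ j, ∑ k, (B x i j k)^2)
        - (R x * (R x - ψ (R x)) / (ψ (R x))^2) * (∑ i, (X x i)^2) :=
  stmt_8_general R divX divEuX ψ ψ' hψpos hode u gradf gradR hR B X hX hdivX hdivEuX
end
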